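/- For k ∈ ℕ, let H_k be the closed subspace of ℓ²(P) spanned by {e_{σ·b^n} : σ ∈ Σ_k, n ∈ ℕ}. Then for all σ, τ ∈ Σ_k and all l, m ∈ ℕ, the operator T_σ T_b^l ((T_b)*)^m (T_τ)* maps H_k into H_k. -/

import Mathlib

/-!
For `w = ρ bⁿ` with `ρ ∈ Σ_k`, the vector `(T_b*)^m T_τ* e_w` is `e_z` when `w = τ b^m z` with
`z ∈ P`, and `0` when no such `z` exists. Since `τ` and `ρ` both have height `k`, such a `z` has
height `0`, and the elements of `P` of height `0` are exactly the powers of `b`. So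
`T_σ T_b^l (T_b*)^m T_τ*` maps every spanning vector `e_{ρ bⁿ}` of `H_k` to `0` or to
`e_{σ b^{l+t}}`, another spanning vector; the span is invariant, hence so is its closure.
-/

open scoped Classical

namespace BSpaper

/-- The single Baumslag–Solitar relator `a * b^c * (b^d * a)⁻¹` on two generators
(`true` plays the role of `a`, `false` the role of `b`). -/
def rels (c d : ℕ) : Set (FreeGroup Bool) :=
  {FreeGroup.of true * FreeGroup.of false ^ c * (FreeGroup.of false ^ d * FreeGroup.of true)⁻¹}

/-- The Baumslag–Solitar group `BS(c,d) = ⟨a, b ∣ a b^c = b^d a⟩`. -/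
abbrev Grp (c d : ℕ) := PresentedGroup (rels c d)

variable (c d : ℕ)

/-- The generator `a`. -/
def a : Grp c d := PresentedGroup.of true

/-- The generator `b`. -/
def b : Grp c d := PresentedGroup.of false

/-- The submonoid `P` of `BS(c,d)` generated by `a` and `b`. -/
def P : Submonoid (Grp c d) := Submonoid.closure {a c d, b c d}

/-- The word `b^{s₀} a b^{s₁} a ⋯ b^{s_{k-1}} a` associated to a list of digits `s_i < d`. -/
def wordStem : List (Fin d) → Grp c d
  | [] => 1
  | i :: l => b c d ^ (i : ℕ) * a c d * wordStem l

/-- `Σ_k`: the set of stems of height `k`. -/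
def SigmaSet (k : ℕ) : Set (Grp c d) :=
  {g | ∃ l : List (Fin d), l.length = k ∧ wordStem c d l = g}

/-- The data `(l, t)` of a normal-form decomposition `x = (b^{s₀} a ⋯ b^{s_{k-1}} a) * b^t`,
chosen by choice when it exists (it exists, uniquely, for every `x ∈ P`). -/
noncomputable def nf (x : Grp c d) : List (Fin d) × ℕ :=
  if h : ∃ p : List (Fin d) × ℕ, x = wordStem c d p.1 * b c d ^ p.2 then h.choose else ([], 0)

/-- The stem of `x`, i.e. the stem part of the normal form of `x`. -/
noncomputable def stem (x : Grp c d) : Grp c d := wordStem c d (nf c d x).1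

/-- The left-invariant partial order on `BS(c,d)`: `g ≤ h` iff `g⁻¹ * h ∈ P`. -/
def bsLe (g h : Grp c d) : Prop := g⁻¹ * h ∈ P c d

lemma a_mem_P : a c d ∈ P c d := Submonoid.subset_closure (Set.mem_insert _ _)

lemma b_mem_P : b c d ∈ P c d :=
  Submonoid.subset_closure (Set.mem_insert_of_mem _ rfl)

lemma wordStem_mem_P (l : List (Fin d)) : wordStem c d l ∈ P c d := by
  induction l with
  | nil => exact one_mem _
  | cons i l ih =>
      exact mul_mem (mul_mem (pow_mem (b_mem_P c d) _) (a_mem_P c d)) ih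

/-- `b` as an element of the submonoid `P`. -/
def bP : P c d := ⟨b c d, b_mem_P c d⟩

noncomputable abbrev l2P := lp (fun _ : P c d => ℂ) 2

/-- `H_k`: the closed subspace of `ℓ²(P)` spanned by `{e_{σ·bⁿ} : σ ∈ Σ_k, n ∈ ℕ}`. -/
noncomputable def Hk (k : ℕ) : Submodule ℂ (l2P c d) :=
  (Submodule.span ℂ {v : l2P c d | ∃ (l : List (Fin d)) (n : ℕ), l.length = k ∧
    v = lp.single 2 (⟨wordStem c d l * b c d ^ n,
          mul_mem (wordStem_mem_P c d l) (pow_mem (b_mem_P c d) n)⟩ : P c d)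
        (1 : ℂ)}).topologicalClosure

end BSpaper

section LeftTranslation

open ContinuousLinearMap
open scoped lp

variable {M : Type*} [Monoid M] [DecidableEq M] {T : M → (ℓ²(M, ℂ) →L[ℂ] ℓ²(M, ℂ))}

theorem adjoint_leftTranslation_apply
    (hT : ∀ x y : M, T x (lp.single 2 y 1) = lp.single 2 (x * y) 1) (x : M) (u : ℓ²(M, ℂ))
    (z : M) : adjoint (T x) u z = u (x * z) := by
  have h := adjoint_inner_right (T x) (lp.single 2 z 1) u
  simpa [hT, lp.inner_single_left] using h

theorem adjoint_pow_leftTranslation_apply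
    (hT : ∀ x y : M, T x (lp.single 2 y 1) = lp.single 2 (x * y) 1) (x : M) (m : ℕ)
    (u : ℓ²(M, ℂ)) (z : M) : (adjoint (T x) ^ m) u z = u (x ^ m * z) := by
  induction m generalizing u with
  | zero => simp
  | succ m ih =>
    rw [pow_succ, mul_apply_eq_comp, ih, adjoint_leftTranslation_apply hT, ← mul_assoc,
      ← pow_succ']

theorem adjoint_pow_mul_adjoint_leftTranslation
    (hT : ∀ x y : M, T x (lp.single 2 y 1) = lp.single 2 (x * y) 1) (x y : M) (m : ℕ) :
    adjoint (T x) ^ m * adjoint (T y) = adjoint (T (y * x ^ m)) := by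
  ext1 u
  refine lp.ext (funext fun z => ?_)
  rw [mul_apply_eq_comp, adjoint_pow_leftTranslation_apply hT,
    adjoint_leftTranslation_apply hT, adjoint_leftTranslation_apply hT, mul_assoc]

theorem leftTranslation_pow_single
    (hT : ∀ x y : M, T x (lp.single 2 y 1) = lp.single 2 (x * y) 1) (x y : M) (l : ℕ) :
    (T x ^ l) (lp.single 2 y 1) = lp.single 2 (x ^ l * y) 1 := by
  induction l generalizing y with
  | zero => simp
  | succ l ih => rw [pow_succ', mul_apply_eq_comp, ih, hT, ← mul_assoc, ← pow_succ']

theorem adjoint_leftTranslation_single_mul [IsLeftCancelMul M]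
    (hT : ∀ x y : M, T x (lp.single 2 y 1) = lp.single 2 (x * y) 1) (x z : M) :
    adjoint (T x) (lp.single 2 (x * z) 1) = lp.single 2 z 1 := by
  refine lp.ext (funext fun z' => ?_)
  simp [adjoint_leftTranslation_apply hT, Pi.single_apply]

theorem adjoint_leftTranslation_single_eq_zero
    (hT : ∀ x y : M, T x (lp.single 2 y 1) = lp.single 2 (x * y) 1) {x w : M}
    (hw : ∀ z, x * z ≠ w) : adjoint (T x) (lp.single 2 w 1) = 0 := by
  refine lp.ext (funext fun z => ?_)
  simp [adjoint_leftTranslation_apply hT, hw z]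

end LeftTranslation

namespace BSpaper

variable (c d : ℕ)

noncomputable def theta : Grp c d →* Multiplicative ℤ :=
  PresentedGroup.toGroup (f := fun x : Bool => if x then Multiplicative.ofAdd 1 else 1) <| by
    rintro r rfl
    simp

@[simp] theorem theta_a : theta c d (a c d) = Multiplicative.ofAdd 1 := by
  simp [theta, a]

@[simp] theorem theta_b : theta c d (b c d) = 1 := by
  simp [theta, b]

@[simp] theorem theta_wordStem (l : List (Fin d)) :
    theta c d (wordStem c d l) = Multiplicative.ofAdd (l.length : ℤ) := by
  induction l with
  | nil => rfl
  | cons i l ih =>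
    simp only [wordStem, map_mul, map_pow, theta_a, theta_b, ih, one_pow, one_mul,
      List.length_cons, ← ofAdd_add]
    rw [add_comm]
    push_cast
    rfl

theorem exists_eq_b_pow_of_mem_P_of_theta_eq_one {g : Grp c d} (hg : g ∈ P c d)
    (hθ : theta c d g = 1) : ∃ t : ℕ, g = b c d ^ t := by
  suffices ∀ g ∈ P c d, 0 ≤ (theta c d g).toAdd ∧ (theta c d g = 1 → ∃ t : ℕ, g = b c d ^ t)
    from (this g hg).2 hθ
  intro g hg
  induction hg using Submonoid.closure_induction with
  | mem g hg =>
    rcases hg with rfl | rfl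
    · simp
    · exact ⟨by simp, fun _ => ⟨1, (pow_one _).symm⟩⟩
  | one => exact ⟨by simp, fun _ => ⟨0, (pow_zero _).symm⟩⟩
  | mul x y _ _ hx hy =>
    refine ⟨?_, fun hxy => ?_⟩
    · simpa using add_nonneg hx.1 hy.1
    · have hsum : (theta c d x).toAdd + (theta c d y).toAdd = 0 := by
        simpa using congrArg Multiplicative.toAdd hxy
      obtain ⟨s, rfl⟩ := hx.2 (toAdd_eq_zero.mp (by linarith [hx.1, hy.1]))
      obtain ⟨t, rfl⟩ := hy.2 (toAdd_eq_zero.mp (by linarith [hx.1, hy.1]))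
      exact ⟨s + t, (pow_add _ _ _).symm⟩

theorem exists_eq_b_pow_of_wordStem_mul_eq {τ ρ : List (Fin d)} (hlen : τ.length = ρ.length)
    {m n : ℕ} {z : Grp c d} (hz : z ∈ P c d)
    (h : wordStem c d τ * b c d ^ m * z = wordStem c d ρ * b c d ^ n) :
    ∃ t : ℕ, z = b c d ^ t := by
  refine exists_eq_b_pow_of_mem_P_of_theta_eq_one c d hz ?_
  have := congrArg (theta c d) h
  simpa [hlen] using this

open ContinuousLinearMap in
theorem statement18_general (c d : ℕ)
    (T : P c d → (l2P c d →L[ℂ] l2P c d))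
    (hT : ∀ x y : P c d, T x (lp.single 2 y 1) = lp.single 2 (x * y) 1)
    (k : ℕ) (σ τ : List (Fin d)) (hσ : σ.length = k) (hτ : τ.length = k) (l m : ℕ) :
    ∀ v ∈ Hk c d k,
      (T ⟨wordStem c d σ, wordStem_mem_P c d σ⟩ * T (bP c d) ^ l
          * adjoint (T (bP c d)) ^ m
          * adjoint (T ⟨wordStem c d τ, wordStem_mem_P c d τ⟩)) v ∈ Hk c d k := by
  rw [mul_assoc _ (adjoint _ ^ m), adjoint_pow_mul_adjoint_leftTranslation hT]
  refine Submodule.topologicalClosure_mem_invtSubmodule ?_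
  rw [Module.End.mem_invtSubmodule, Submodule.span_le]
  rintro _ ⟨ρ, n, hρ, rfl⟩
  simp only [Submodule.comap_coe, Set.mem_preimage, coe_coe, mul_apply_eq_comp]
  by_cases hw : ∃ z, ⟨wordStem c d τ, wordStem_mem_P c d τ⟩ * bP c d ^ m * z =
      (⟨wordStem c d ρ * b c d ^ n, mul_mem (wordStem_mem_P c d ρ) (pow_mem (b_mem_P c d) n)⟩ :
        P c d)
  · obtain ⟨z, hz⟩ := hw
    obtain ⟨t, ht⟩ := exists_eq_b_pow_of_wordStem_mul_eq c d (hτ.trans hρ.symm) z.2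
      (congrArg Subtype.val hz)
    rw [← hz, adjoint_leftTranslation_single_mul hT, leftTranslation_pow_single hT, hT]
    refine Submodule.subset_span ⟨σ, l + t, hσ, congrArg (lp.single 2 · 1) (Subtype.ext ?_)⟩
    simp [ht, bP, pow_add]
  · rw [adjoint_leftTranslation_single_eq_zero hT (not_exists.mp hw), map_zero, map_zero]
    exact zero_mem _

open ContinuousLinearMap in
/-- For all σ, τ ∈ Σ_k (given by digit strings of length k) and all l, m ∈ ℕ, the
operator T_σ T_b^l ((T_b)*)^m (T_τ)* maps H_k into H_k. -/
theorem statement18 (c d : ℕ) (hc : 0 < c) (hd : 0 < d)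
    (T : P c d → (l2P c d →L[ℂ] l2P c d))
    (hT : ∀ x y : P c d, T x (lp.single 2 y 1) = lp.single 2 (x * y) 1)
    (k : ℕ) (σ τ : List (Fin d)) (hσ : σ.length = k) (hτ : τ.length = k) (l m : ℕ) :
    ∀ v ∈ Hk c d k,
      (T ⟨wordStem c d σ, wordStem_mem_P c d σ⟩ * T (bP c d) ^ l
          * adjoint (T (bP c d)) ^ m
          * adjoint (T ⟨wordStem c d τ, wordStem_mem_P c d τ⟩)) v ∈ Hk c d k :=
  statement18_general c d T hT k σ τ hσ hτ l m

end BSpaper
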